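/- Any PCP solution over the instance W constructed from a normal system must end with the pair (dd, r_d(fu)·d): if (u_1,v_1),...,(u_m,v_m) is a sequence of pairs from W with u_1⋯u_m = v_1⋯v_m and m ≥ 1, then (u_m, v_m) = (dd, r_d(fu)·d). -/

import Mathlib

/-- The alphabet `{a, b, c, f, d}`: `a, b` are the letters of the normal
system, and `c`, `f`, `d` are new marker letters. -/
inductive Γ | a | b | c | f | d
deriving DecidableEq

/-- `x` is one of the normal-system letters `a, b`. -/
def isAB (x : Γ) : Prop := x = Γ.a ∨ x = Γ.b

/-- The left desynchronization map `ℓ_d`: insert `d` before every letter. -/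
def ld (v : List Γ) : List Γ := v.flatMap (fun x => [Γ.d, x])

/-- The right desynchronization map `r_d`: insert `d` after every letter. -/
def rd (v : List Γ) : List Γ := v.flatMap (fun x => [x, Γ.d])

/-- One derivation step of the normal system with rule set `P`:
`u → v` iff there is a rule `α X ↦ X β` in `P` (the pair `(α, β)`) and a
word `x` with `u = α x` and `v = x β`. -/
def Step (P : List (List Γ × List Γ)) (u v : List Γ) : Prop :=
  ∃ p ∈ P, ∃ x : List Γ, u = p.1 ++ x ∧ v = x ++ p.2

/-- The rules `P` of a normal system over `{a, b}` with all rule words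
nonempty. -/
def GoodRules (P : List (List Γ × List Γ)) : Prop :=
  ∀ p ∈ P, p.1 ≠ [] ∧ p.2 ≠ [] ∧ (∀ x ∈ p.1, isAB x) ∧ (∀ x ∈ p.2, isAB x)

/-- A word over `{a, b}` that is nonempty. -/
def GoodWord (w : List Γ) : Prop := w ≠ [] ∧ ∀ x ∈ w, isAB x

/-- The PCP instance constructed from the normal system `S = (w, P)` and the
target word `u`:
`W = {(d·ℓ_d(fw), dd), (dd, r_d(fu)·d), (da, ad), (db, bd)}
   ∪ {(ℓ_d(c^j f), r_d(f α_j)), (ℓ_d(β_j), r_d(c^j)) : j = 1, ..., t}`,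
where the `j`-th rule (1-indexed) of `P` is `α_j X ↦ X β_j`. -/
def instW (P : List (List Γ × List Γ)) (w u : List Γ) :
    List (List Γ × List Γ) :=
  [(Γ.d :: ld (Γ.f :: w), [Γ.d, Γ.d]),
   ([Γ.d, Γ.d], rd (Γ.f :: u) ++ [Γ.d]),
   ([Γ.d, Γ.a], [Γ.a, Γ.d]),
   ([Γ.d, Γ.b], [Γ.b, Γ.d])] ++
  (P.zipIdx.map Prod.swap).flatMap (fun jp =>
    [(ld (List.replicate (jp.1 + 1) Γ.c ++ [Γ.f]), rd (Γ.f :: jp.2.1)),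
     (ld jp.2.2, rd (List.replicate (jp.1 + 1) Γ.c))])

/-- A PCP instance `W` has a solution: some nonempty sequence of pairs from
`W` has equal concatenations of first components and of second components. -/
def Solution (W : List (List Γ × List Γ)) : Prop :=
  ∃ s : List (List Γ × List Γ), s ≠ [] ∧ (∀ p ∈ s, p ∈ W) ∧
    (s.map Prod.fst).flatten = (s.map Prod.snd).flatten

/-! The last letter of both sides of a solution is read off its last pair. Every second component
in `W` ends in `d`, and every first component is nonempty, so the first component of the last
pair ends in `d`; among the pairs of `W` only `(dd, r_d(fu)·d)` has this property, because `w` and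
the `β_j` contain no `d`. -/

lemma List.getLast?_flatten_map_of_ne_nil {α β : Type*} {s : List α} (hs : s ≠ [])
    {g : α → List β} (h : g (s.getLast hs) ≠ []) :
    (s.map g).flatten.getLast? = (g (s.getLast hs)).getLast? := by
  conv_lhs => rw [← List.dropLast_append_getLast hs]
  simp [List.getLast?_append_of_ne_nil _ h]

lemma getLast?_ld (v : List Γ) : (ld v).getLast? = v.getLast? := by
  induction v using List.reverseRecOn with
  | nil => rfl
  | append_singleton v x _ => simp [ld]

lemma getLast?_rd {v : List Γ} (hv : v ≠ []) : (rd v).getLast? = some Γ.d := by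
  induction v using List.reverseRecOn with
  | nil => exact absurd rfl hv
  | append_singleton v x _ => simp [rd]

lemma not_isAB_d : ¬ isAB Γ.d := by simp [isAB]

section instW

variable {P : List (List Γ × List Γ)} {w u : List Γ} {p : List Γ × List Γ}

lemma mem_instW_cases (hp : p ∈ instW P w u) :
    p = (Γ.d :: ld (Γ.f :: w), [Γ.d, Γ.d]) ∨ p = ([Γ.d, Γ.d], rd (Γ.f :: u) ++ [Γ.d]) ∨
      p = ([Γ.d, Γ.a], [Γ.a, Γ.d]) ∨ p = ([Γ.d, Γ.b], [Γ.b, Γ.d]) ∨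
      ∃ j, ∃ r ∈ P, p = (ld (List.replicate (j + 1) Γ.c ++ [Γ.f]), rd (Γ.f :: r.1)) ∨
        p = (ld r.2, rd (List.replicate (j + 1) Γ.c)) := by
  simp only [instW, List.mem_append, List.mem_cons, List.not_mem_nil, or_false,
    List.mem_flatMap, List.mem_map] at hp
  rcases hp with (h | h | h | h) | ⟨_, ⟨⟨r, j⟩, hrj, rfl⟩, h⟩
  all_goals first
    | simp only [h, true_or, or_true]
    | exact Or.inr (Or.inr (Or.inr (Or.inr ⟨j, r, List.fst_mem_of_mem_zipIdx hrj, h⟩)))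

lemma getLast?_snd_of_mem_instW (hp : p ∈ instW P w u) : p.2.getLast? = some Γ.d := by
  rcases mem_instW_cases hp with rfl | rfl | rfl | rfl | ⟨j, r, -, rfl | rfl⟩ <;>
    simp [getLast?_rd]

lemma fst_ne_nil_of_mem_instW (hP : GoodRules P) (hp : p ∈ instW P w u) : p.1 ≠ [] := by
  rcases mem_instW_cases hp with rfl | rfl | rfl | rfl | ⟨j, r, hr, rfl | rfl⟩
  any_goals simp [ld]
  exact List.exists_mem_of_ne_nil _ (hP r hr).2.1

lemma eq_of_mem_instW_of_getLast?_fst (hP : GoodRules P) (hw : ∀ x ∈ w, isAB x)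
    (hp : p ∈ instW P w u) (hd : p.1.getLast? = some Γ.d) :
    p = ([Γ.d, Γ.d], rd (Γ.f :: u) ++ [Γ.d]) := by
  rcases mem_instW_cases hp with rfl | rfl | rfl | rfl | ⟨j, r, hr, rfl | rfl⟩
  · rw [← List.singleton_append, List.getLast?_append_of_ne_nil _ (by simp [ld]),
      getLast?_ld] at hd
    rcases List.mem_cons.1 (List.mem_of_getLast? hd) with h | h
    · cases h
    · exact absurd (hw _ h) not_isAB_d
  · rfl
  · simp at hd
  · simp at hd
  · simp [getLast?_ld] at hd
  · rw [getLast?_ld] at hd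
    exact absurd ((hP r hr).2.2.2 _ (List.mem_of_getLast? hd)) not_isAB_d

end instW

theorem pcp_solution_ends_with_final_pair_general
    (P : List (List Γ × List Γ)) (w u : List Γ)
    (hP : GoodRules P) (hw : GoodWord w)
    (s : List (List Γ × List Γ)) (hs : s ≠ [])
    (hmem : ∀ p ∈ s, p ∈ instW P w u)
    (heq : (s.map Prod.fst).flatten = (s.map Prod.snd).flatten) :
    s.getLast? = some ([Γ.d, Γ.d], rd (Γ.f :: u) ++ [Γ.d]) := by
  have hp := hmem _ (List.getLast_mem hs)
  have hsnd := getLast?_snd_of_mem_instW hp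
  have hfst : (s.getLast hs).1.getLast? = some Γ.d := by
    rw [← List.getLast?_flatten_map_of_ne_nil hs (fst_ne_nil_of_mem_instW hP hp), heq,
      List.getLast?_flatten_map_of_ne_nil hs (List.ne_nil_of_mem (List.mem_of_getLast? hsnd)),
      hsnd]
  rw [List.getLast?_eq_some_getLast hs, eq_of_mem_instW_of_getLast?_fst hP hw.2 hp hfst]

theorem pcp_solution_ends_with_final_pair
    (P : List (List Γ × List Γ)) (w u : List Γ)
    (hP : GoodRules P) (hw : GoodWord w) (hu : GoodWord u)
    (s : List (List Γ × List Γ)) (hs : s ≠ [])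
    (hmem : ∀ p ∈ s, p ∈ instW P w u)
    (heq : (s.map Prod.fst).flatten = (s.map Prod.snd).flatten) :
    s.getLast? = some ([Γ.d, Γ.d], rd (Γ.f :: u) ++ [Γ.d]) :=
  pcp_solution_ends_with_final_pair_general P w u hP hw s hs hmem heq
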